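/- The predicate ¬IllegalLiveRoot(u) is closed under computation steps: no new illegal live root is ever created. -/

import Mathlib

/-!
A process can only gain a child `v` through `R3`, whose guard needs the process to be `Power`
and to differ in colour from `v`. A process `u ≠ r` that loses its parent in a step either
becomes erroneous (`RC4`, `RC5`) or executes `R7`, whose guard leaves it childless and either
not `Power` or of the same colour as all its neighbours. So a parentless live non-root process
that is detached stays detached, and one that acts ends up detached as well.
-/

namespace BFS

inductive Status : Type
  | Idle | Working | Power | WeakE | StrongE
deriving DecidableEq

open Status

inductive Rule (V : Type) : Type
  | RC1 | RC2 | RC3 | RC4 | RC5 | RC6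
  | R1 | R2
  | R3 (v : V)
  | R4 | R5 | R6 | R7
deriving DecidableEq

structure ProcState (V : Type) where
  P : Option V
  TS : Option V
  C : Bool
  S : Status
  ph : Bool

abbrev Config (V : Type) := V → ProcState V

variable {V : Type} [Fintype V] [DecidableEq V]

/-- Erroneous statuses. -/
def Erroneous (s : Status) : Prop := s = WeakE ∨ s = StrongE

/-- The children of `u`: neighbors whose parent pointer designates `u`. -/
def Child (G : SimpleGraph V) (c : Config V) (u : V) : Set V :=
  {v | G.Adj u v ∧ (c v).P = some u}

/-- Closed neighborhood `N[u]`. -/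
def ClosedNbr (G : SimpleGraph V) (u : V) : Set V := insert u (G.neighborSet u)

def StrongConflict (G : SimpleGraph V) (c : Config V) (u : V) : Prop :=
  (c u).S ≠ StrongE ∧
    ∃ w ∈ ClosedNbr G u, ∃ v ∈ ClosedNbr G u,
      (c v).C ≠ (c u).C ∧ (c w).S = Power ∧ (c v).S = Power

def Conflict (G : SimpleGraph V) (r : V) (c : Config V) (u : V) : Prop :=
  (u ≠ r ∧ (c u).P ≠ none ∧
      ∃ v ∈ G.neighborSet u, (c v).S = Power ∧ (c v).C ≠ (c u).C) ∨
  (u = r ∧ (c u).S ≠ StrongE ∧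
      ∃ v ∈ G.neighborSet u, (c v).S = Power ∧
        ((c v).C ≠ (c u).C ∨ Child G c u = ∅))

def Detached (G : SimpleGraph V) (r : V) (c : Config V) (u : V) : Prop :=
  Child G c u = ∅ ∧ ((c u).P = none ∨ u = r) ∧ (c u).S ≠ Power

def StrongEReady (G : SimpleGraph V) (c : Config V) (u : V) : Prop :=
  (c u).S = StrongE ∧ ∀ v ∈ G.neighborSet u, (c v).S ≠ Power

def PowerFaulty (G : SimpleGraph V) (c : Config V) (u : V) : Prop :=
  (c u).S = Power ∧ ∃ v ∈ G.neighborSet u, (c v).S = StrongE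

def Faulty (G : SimpleGraph V) (r : V) (c : Config V) (u : V) : Prop :=
  u ≠ r ∧ ∃ p, (c u).P = some p ∧ ¬ Erroneous (c p).S ∧
    (Erroneous (c u).S ∨
     (c u).C ≠ (c p).C ∨
     ((c p).S ≠ Working ∧ (c u).S ≠ Idle) ∨
     ((c p).S = (c u).S ∧ (c u).ph ≠ (c p).ph) ∨
     ((c u).S = Power ∧ (c u).ph ≠ (c p).ph) ∨
     ((c p).S = Power ∧ (Child G c u ≠ ∅ ∨ (c u).ph ≠ (c p).ph)))

def IllegalRoot (G : SimpleGraph V) (r : V) (c : Config V) (u : V) : Prop :=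
  u ≠ r ∧ (c u).P = none ∧ ¬ Detached G r c u

def IllegalLiveRoot (G : SimpleGraph V) (r : V) (c : Config V) (u : V) : Prop :=
  IllegalRoot G r c u ∧ ¬ Erroneous (c u).S

def IllegalChild (r : V) (c : Config V) (u : V) : Prop :=
  u ≠ r ∧ ∃ p, (c u).P = some p ∧ Erroneous (c p).S

def Isolated (G : SimpleGraph V) (c : Config V) (u : V) : Prop :=
  (c u).S = WeakE ∨ (c u).S = Working ∨ StrongEReady G c u

def Ok (G : SimpleGraph V) (r : V) (c : Config V) (u : V) : Prop :=
  ¬ StrongConflict G c u ∧ ¬ Conflict G r c u ∧ ¬ PowerFaulty G c u ∧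
  ¬ Faulty G r c u ∧ ¬ IllegalRoot G r c u ∧ ¬ IllegalChild r c u

def QuietSubTree (G : SimpleGraph V) (c : Config V) (u : V) : Prop :=
  ∀ v ∈ Child G c u, (c v).S = Idle ∧ (c v).ph = (c u).ph

def EndFirstPhase (G : SimpleGraph V) (c : Config V) (u : V) : Prop :=
  (c u).S = Power ∧ QuietSubTree G c u ∧ ∀ v ∈ G.neighborSet u, (c v).C = (c u).C

def EndPhase (G : SimpleGraph V) (c : Config V) (u : V) : Prop :=
  (c u).S = Working ∧ QuietSubTree G c u

def EndLastPhase (G : SimpleGraph V) (c : Config V) (u : V) : Prop :=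
  Child G c u = ∅ ∧ (EndFirstPhase G c u ∨ EndPhase G c u)

def EndIntermediatePhase (G : SimpleGraph V) (c : Config V) (u : V) : Prop :=
  Child G c u ≠ ∅ ∧ (EndFirstPhase G c u ∨ EndPhase G c u)

def Connection (G : SimpleGraph V) (r : V) (c : Config V) (u v : V) : Prop :=
  Detached G r c u ∧ (Isolated G c u ∨ (c u).S = Idle) ∧
  G.Adj u v ∧ (c v).C ≠ (c u).C ∧ (c v).S = Power

def NewPhase (G : SimpleGraph V) (c : Config V) (u : V) : Prop :=
  ∃ p, (c u).P = some p ∧ QuietSubTree G c u ∧ (c u).S = Idle ∧ (c u).ph ≠ (c p).ph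

/-- Guards of the rules RC1–RC6, R1–R7 of the algorithm. -/
def Guard (G : SimpleGraph V) (r : V) : Rule V → Config V → V → Prop
  | .RC1, c, u => u = r ∧ ¬ Conflict G r c u ∧ PowerFaulty G c u ∧ QuietSubTree G c u
  | .RC2, c, u => u = r ∧ Detached G r c u ∧ StrongEReady G c u
  | .RC3, c, u => u = r ∧ Conflict G r c u
  | .RC4, c, u => u ≠ r ∧ StrongConflict G c u
  | .RC5, c, u => u ≠ r ∧ ¬ StrongConflict G c u ∧
      (Conflict G r c u ∨ Faulty G r c u ∨ PowerFaulty G c u ∨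
       IllegalLiveRoot G r c u ∨ IllegalChild r c u)
  | .RC6, c, u => u ≠ r ∧ Detached G r c u ∧ Isolated G c u ∧
      ∀ v ∈ G.neighborSet u, (c v).C = (c u).C ∨ (c v).S ≠ Power
  | .R1, c, u => u = r ∧ Ok G r c u ∧ EndLastPhase G c u ∧
      ∀ v ∈ G.neighborSet u, (c v).S ≠ StrongE
  | .R2, c, u => u = r ∧ Ok G r c u ∧ EndIntermediatePhase G c u
  | .R3 v, c, u => u ≠ r ∧ Ok G r c u ∧ Connection G r c u v
  | .R4, c, u => u ≠ r ∧ Ok G r c u ∧ NewPhase G c u ∧ Child G c u ≠ ∅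
  | .R5, c, u => u ≠ r ∧ Ok G r c u ∧ NewPhase G c u ∧ Child G c u = ∅ ∧
      ∀ v ∈ G.neighborSet u, (c v).S ≠ StrongE
  | .R6, c, u => u ≠ r ∧ Ok G r c u ∧ EndIntermediatePhase G c u
  | .R7, c, u => u ≠ r ∧ Ok G r c u ∧ (c u).P ≠ none ∧ EndLastPhase G c u

/-- Phase of the parent of `u` (or `u`'s own phase if it has no parent). -/
def parentPh (c : Config V) (u : V) : Bool :=
  match (c u).P with
  | some p => (c p).ph
  | none => (c u).ph

/-- The action of each rule: the new local state of the executing process `u`. -/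
def execRule (c : Config V) (u : V) : Rule V → ProcState V
  | .RC1 => { c u with S := Working }
  | .RC2 => { c u with S := Working }
  | .RC3 => { c u with S := StrongE }
  | .RC4 => { c u with S := StrongE, P := none }
  | .RC5 => { c u with S := WeakE, P := none }
  | .RC6 => { c u with S := Idle }
  | .R1 => { c u with C := !(c u).C, S := Power }
  | .R2 => { c u with ph := !(c u).ph, S := Working }
  | .R3 v => { c u with C := (c v).C, ph := (c v).ph, S := Idle, P := some v, TS := some v }
  | .R4 => { c u with ph := parentPh c u, S := Working }
  | .R5 => { c u with ph := parentPh c u, S := Power }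
  | .R6 => { c u with S := Idle }
  | .R7 => { c u with S := Idle, P := none }

/-- A computation step: a nonempty set of enabled processes each atomically
executes one enabled rule; all other processes keep their state. -/
def IsStep (G : SimpleGraph V) (r : V) (c1 : Config V)
    (act : V → Option (Rule V)) (c2 : Config V) : Prop :=
  (∃ u ρ, act u = some ρ) ∧
  ∀ u, (act u = none → c2 u = c1 u) ∧
       ∀ ρ, act u = some ρ → Guard G r ρ c1 u ∧ c2 u = execRule c1 u ρ

def Step (G : SimpleGraph V) (r : V) (c1 c2 : Config V) : Prop :=
  ∃ act, IsStep G r c1 act c2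

/-- A process is enabled if the guard of some rule holds at it. -/
def Enabled (G : SimpleGraph V) (r : V) (c : Config V) (u : V) : Prop :=
  ∃ ρ : Rule V, Guard G r ρ c u

/-- Well-formed configurations: pointers designate neighbors, and the root has
no parent and only uses the statuses Power, Working, StrongE. -/
def WellFormed (G : SimpleGraph V) (r : V) (c : Config V) : Prop :=
  (∀ u v, (c u).P = some v → G.Adj u v) ∧
  (∀ u v, (c u).TS = some v → G.Adj u v) ∧
  (c r).P = none ∧ (c r).TS = none ∧
  ((c r).S = Power ∨ (c r).S = Working ∨ (c r).S = StrongE)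

/-- `PowerParent u`: some descendant of `u` (possibly `u`) may take the `Power`
status by a series of R4/R5 moves. -/
inductive PowerParent (c : Config V) : V → Prop
  | base (u p : V) : (c u).P = some p → (c u).S = Idle → (c p).S = Working →
      (c u).ph ≠ (c p).ph → PowerParent c u
  | step (u p : V) : (c u).P = some p → PowerParent c p → (c u).S = Idle →
      (c u).ph = (c p).ph → PowerParent c u

def Influential (c : Config V) (u : V) : Prop :=
  (c u).S = Power ∨ PowerParent c u

/-- `u` lies on a branch rooted at `r` all of whose members are non-faulty,
and the root is not StrongE. -/
inductive InLegalTree (G : SimpleGraph V) (r : V) (c : Config V) : V → Prop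
  | root : (c r).S ≠ StrongE → InLegalTree G r c r
  | child (u p : V) : (c u).P = some p → InLegalTree G r c p →
      ¬ Faulty G r c u → InLegalTree G r c u

def InsideLegalTree (G : SimpleGraph V) (r : V) (c : Config V) (u : V) : Prop :=
  InLegalTree G r c u ∧ (c u).S ≠ Power ∧ Child G c u ≠ ∅

def UnSafe (G : SimpleGraph V) (r : V) (c : Config V) (u : V) : Prop :=
  InsideLegalTree G r c u ∧
    ∃ v ∈ G.neighborSet u, (c v).C ≠ (c u).C ∧ Influential c v

def UnRegular (G : SimpleGraph V) (r : V) (c : Config V) (u : V) : Prop :=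
  ¬ Detached G r c u ∧ ¬ InLegalTree G r c u

/-- Infinite executions of the algorithm (by Theorem `no deadlock` there is no
terminal configuration). -/
structure Execution (G : SimpleGraph V) (r : V) where
  conf : ℕ → Config V
  act : ℕ → V → Option (Rule V)
  valid : ∀ i, IsStep G r (conf i) (act i) (conf (i + 1))

/-- The suffix of an execution starting at time `k`. -/
def Execution.shift {G : SimpleGraph V} {r : V} (e : Execution G r) (k : ℕ) :
    Execution G r where
  conf := fun i => e.conf (k + i)
  act := fun i => e.act (k + i)
  valid := fun i => e.valid (k + i)

/-- The first round of `e` is completed by time `t`: every process enabled in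
the initial configuration has executed a rule or been neutralized before `t`. -/
def CompletesRound (G : SimpleGraph V) (r : V) (e : Execution G r) (t : ℕ) : Prop :=
  ∀ u, Enabled G r (e.conf 0) u →
    ∃ j, j < t ∧ (e.act j u ≠ none ∨ ¬ Enabled G r (e.conf (j + 1)) u)

/-- `RoundsElapsed G r e k t`: at least `k` rounds of `e` are completed by time `t`. -/
def RoundsElapsed (G : SimpleGraph V) (r : V) (e : Execution G r) : ℕ → ℕ → Prop
  | 0, t => t = 0
  | k + 1, t => ∃ s, s ≤ t ∧ RoundsElapsed G r e k s ∧
      CompletesRound G r (e.shift s) (t - s)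

/-- The tree-construction rules R1–R7. -/
def TreeRule : Rule V → Prop := fun ρ =>
  ρ = Rule.R1 ∨ ρ = Rule.R2 ∨ (∃ v, ρ = Rule.R3 v) ∨ ρ = Rule.R4 ∨
  ρ = Rule.R5 ∨ ρ = Rule.R6 ∨ ρ = Rule.R7

noncomputable def FaultyCount (G : SimpleGraph V) (r : V) (c : Config V) : ℕ :=
  {u | Faulty G r c u}.ncard

/-- Inside-safe executions: insideLegalTree processes execute only R1–R7 and
the number of Faulty processes stays constant. -/
def InsideSafeExec (G : SimpleGraph V) (r : V) (e : Execution G r) : Prop :=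
  (∀ i u ρ, InsideLegalTree G r (e.conf i) u → e.act i u = some ρ → TreeRule ρ) ∧
  (∀ i, FaultyCount G r (e.conf i) = FaultyCount G r (e.conf 0))

/-- Safe executions. -/
def SafeExec (G : SimpleGraph V) (r : V) (e : Execution G r) : Prop :=
  (∀ i u ρ, InsideLegalTree G r (e.conf i) u → e.act i u = some ρ → TreeRule ρ) ∧
  (∀ i u, Influential (e.conf i) u → UnRegular G r (e.conf i) u → e.act i u = none) ∧
  (∀ i u, ¬ PowerFaulty G (e.conf i) u → ¬ PowerFaulty G (e.conf (i + 1)) u) ∧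
  (∀ i u, e.act i u ≠ some Rule.RC1 ∧ e.act i u ≠ some Rule.RC4 ∧
      e.act i u ≠ some Rule.RC3 ∧ e.act i u ≠ some Rule.RC2)

/-- Pseudo-regular executions. -/
def PseudoRegularExec (G : SimpleGraph V) (r : V) (e : Execution G r) : Prop :=
  SafeExec G r e ∧
  (∀ i u ρ, InLegalTree G r (e.conf i) u → e.act i u = some ρ → TreeRule ρ) ∧
  (∀ i u, ¬ UnRegular G r (e.conf i) u → ¬ UnRegular G r (e.conf (i + 1)) u)

/-- Regular executions: pseudo-regular and all processes execute only R1–R7. -/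
def RegularExec (G : SimpleGraph V) (r : V) (e : Execution G r) : Prop :=
  PseudoRegularExec G r e ∧ (∀ i u ρ, e.act i u = some ρ → TreeRule ρ)

/-- `u` executes rules infinitely often along `e`. -/
def ActsInfOften {G : SimpleGraph V} {r : V} (e : Execution G r) (u : V) : Prop :=
  ∀ k, ∃ i, k ≤ i ∧ e.act i u ≠ none

def A1 (G : SimpleGraph V) (r : V) (c : Config V) : Prop :=
  ∀ u, ¬ Faulty G r c u ∧ ¬ IllegalLiveRoot G r c u

def A2 (G : SimpleGraph V) (r : V) (c : Config V) : Prop :=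
  A1 G r c ∧ ∀ u, ¬ UnSafe G r c u

def A3 (G : SimpleGraph V) (r : V) (c : Config V) : Prop :=
  A2 G r c ∧ ∀ u, ¬ Influential c u ∨ InLegalTree G r c u

def A4 (G : SimpleGraph V) (r : V) (c : Config V) : Prop :=
  A3 G r c ∧ ∀ u, (c u).S ≠ StrongE

def PIC (r : V) (c : Config V) (u : V) : Prop :=
  Influential c u ∧ (c u).C ≠ (c r).C

def PICPowerParent (r : V) (c : Config V) (u : V) : Prop :=
  PIC r c u ∧ PowerParent c u

end BFS

namespace BFS

open Status

variable {V : Type} {G : SimpleGraph V} {r : V} {c : Config V} {u : V}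

/-- `Connection G r c v u` is the part of the guard of `R3 u` at `v` that concerns `u`. -/
def StaysChildless (G : SimpleGraph V) (r : V) (c : Config V) (u : V) : Prop :=
  Child G c u = ∅ ∧ ∀ v, ¬ Connection G r c v u

theorem execRule_P_eq_some {p : V} {ρ : Rule V}
    (h : (execRule c u ρ).P = some p) : (c u).P = some p ∨ ρ = .R3 p := by
  cases ρ <;> simp_all [execRule]

theorem not_connection_of_ne_power (hS : (c u).S ≠ Power) (v : V) : ¬ Connection G r c v u :=
  fun hconn => hS hconn.2.2.2.2

theorem not_connection_of_endFirstPhase (hEFP : EndFirstPhase G c u) (v : V) :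
    ¬ Connection G r c v u :=
  fun hconn => hconn.2.2.2.1 (hEFP.2.2 v hconn.2.2.1.symm).symm

theorem Detached.staysChildless (h : Detached G r c u) : StaysChildless G r c u :=
  ⟨h.1, not_connection_of_ne_power h.2.2⟩

namespace IsStep

variable {c1 c2 : Config V} {act : V → Option (Rule V)}

theorem mem_child (hstep : IsStep G r c1 act c2) {v : V} (hv : v ∈ Child G c2 u) :
    v ∈ Child G c1 u ∨ Connection G r c1 v u := by
  obtain ⟨hadj, hvP⟩ := hv
  cases hav : act v with
  | none => exact Or.inl ⟨hadj, (hstep.2 v).1 hav ▸ hvP⟩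
  | some ρ =>
    obtain ⟨hguard, hexec⟩ := (hstep.2 v).2 ρ hav
    rcases execRule_P_eq_some (hexec ▸ hvP) with hP | rfl
    · exact Or.inl ⟨hadj, hP⟩
    · exact Or.inr hguard.2.2

theorem child_eq_empty (hstep : IsStep G r c1 act c2) (h : StaysChildless G r c1 u) :
    Child G c2 u = ∅ := by
  refine Set.eq_empty_of_forall_notMem fun v hv => ?_
  rcases hstep.mem_child hv with hv1 | hconn
  · exact (h.1 ▸ hv1 : v ∈ (∅ : Set V))
  · exact h.2 v hconn

end IsStep

/-- Only `RC6` and `R7` survive the hypotheses; `R6` is ruled out because its guard `Ok`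
forbids an illegal root. -/
theorem staysChildless_of_guard {ρ : Rule V} (hguard : Guard G r ρ c u) (hur : u ≠ r)
    (hP : (execRule c u ρ).P = none) (hS : ¬ Erroneous (execRule c u ρ).S) :
    StaysChildless G r c u ∧ (execRule c u ρ).S ≠ Power := by
  cases ρ with
  | RC1 | RC2 | RC3 | R1 | R2 => exact absurd hguard.1 hur
  | RC4 | RC5 => simp [execRule, Erroneous] at hS
  | R3 w => simp [execRule] at hP
  | R4 | R5 =>
    obtain ⟨p, hp, -⟩ := hguard.2.2.1
    simp [execRule, hp] at hP
  | RC6 => exact ⟨hguard.2.1.staysChildless, by simp [execRule]⟩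
  | R6 =>
    obtain ⟨-, hok, hchild, -⟩ := hguard
    have hdet : Detached G r c u := by
      by_contra hnd
      exact hok.2.2.2.2.1 ⟨hur, by simpa [execRule] using hP, hnd⟩
    exact absurd hdet.1 hchild
  | R7 =>
    obtain ⟨-, -, -, hchild, hEFP | hEP⟩ := hguard
    · exact ⟨⟨hchild, not_connection_of_endFirstPhase hEFP⟩, by simp [execRule]⟩
    · exact ⟨⟨hchild, not_connection_of_ne_power (by simp [hEP.1])⟩, by simp [execRule]⟩

theorem stmt2_general {V : Type}
    (G : SimpleGraph V) (r : V) (c1 c2 : Config V) (act : V → Option (Rule V))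
    (hstep : IsStep G r c1 act c2) (u : V)
    (h1 : ¬ IllegalLiveRoot G r c1 u) :
    ¬ IllegalLiveRoot G r c2 u := by
  rintro ⟨⟨hur, hP, hnd⟩, hS⟩
  suffices h : StaysChildless G r c1 u ∧ (c2 u).S ≠ Power from
    hnd ⟨hstep.child_eq_empty h.1, Or.inl hP, h.2⟩
  cases hau : act u with
  | none =>
    rw [(hstep.2 u).1 hau] at hP hS ⊢
    have hdet : Detached G r c1 u := by
      by_contra hnd1
      exact h1 ⟨⟨hur, hP, hnd1⟩, hS⟩
    exact ⟨hdet.staysChildless, hdet.2.2⟩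
  | some ρ =>
    obtain ⟨hguard, hexec⟩ := (hstep.2 u).2 ρ hau
    rw [hexec] at hP hS ⊢
    exact staysChildless_of_guard hguard hur hP hS

/-- `¬IllegalLiveRoot(u)` is closed under computation steps:
no new illegal live root is ever created. -/
theorem stmt2 {V : Type} [Fintype V] [DecidableEq V]
    (G : SimpleGraph V) (r : V) (c1 c2 : Config V) (act : V → Option (Rule V))
    (hstep : IsStep G r c1 act c2) (u : V)
    (h1 : ¬ IllegalLiveRoot G r c1 u) :
    ¬ IllegalLiveRoot G r c2 u :=
  stmt2_general G r c1 c2 act hstep u h1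

end BFS
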